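/- arXiv:2109.08602 — 3 statements merged into one kernel-verified Lean document; each statement's English description precedes it below -/
import Mathlib

section
/- Fix an integer r ≥ 4, an integer q₁ ≥ 2, and real numbers s, t > 0. Then, as m → ∞ (over integers m ≥ q₁): (i) a^{int2,r}_m(t)/m^s → 0; (ii) a^{int1,r}_m(t)/a^{int2,r}_m(s) → 0; (iii) (ln m)^t / a^{int1,r}_m(s) → 0. In particular the intermediate scales grow faster than every logarithmic scale and slower than every polynomial scale. -/
open Filter
open scoped Topology

noncomputable section

/-- `Γ_r(x) = (Γ(x^{1/r} + 1))^r`, where `Γ` is the Euler Gamma function. -/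
def GammaR (r : ℕ) (x : ℝ) : ℝ := (Real.Gamma (x ^ ((r : ℝ)⁻¹) + 1)) ^ r

/-- The inverse of `Γ_r` on `[1,∞)` (where `Γ_r` is strictly increasing with `Γ_r 1 = 1`). -/
def GammaRInv (r : ℕ) (y : ℝ) : ℝ := sSup {x : ℝ | 1 ≤ x ∧ GammaR r x ≤ y}

/-- The intermediate scaling family `a^{int1,r}_m(t) = m^(t / Γ_r⁻¹(ln m / ln q₁))`. -/
def intScale1 (r q₁ : ℕ) (m : ℕ) (t : ℝ) : ℝ :=
  (m : ℝ) ^ (t / GammaRInv r (Real.log m / Real.log q₁))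

/-- The intermediate scaling family
`a^{int2,r}_m(t) = m^(t / (Γ_r⁻¹(ln m / ln q₁))^((r-2)/r))`. -/
def intScale2 (r q₁ : ℕ) (m : ℕ) (t : ℝ) : ℝ :=
  (m : ℝ) ^ (t / GammaRInv r (Real.log m / Real.log q₁) ^ (((r : ℝ) - 2) / (r : ℝ)))

/-- The logarithmic scaling family `a^{ln}_m(t) = (ln m)^t`. -/
def logScale (m : ℕ) (t : ℝ) : ℝ := Real.log m ^ t

/-- The polynomial scaling family `a^{pol}_m(t) = m^t`. -/
def polScale (m : ℕ) (t : ℝ) : ℝ := (m : ℝ) ^ t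

end

/-!
Put `G(L) = Γ_r⁻¹(L / ln q₁)`. Since `Γ_r(x) ≥ x²` for large `x`, `G` tends to infinity but
`G(L) = O(√L)`; in particular `G(L) ln L = o(L)`. Each ratio is `exp` of `ln m` times an
exponent, and with `L = ln m`, `α = (r - 2) / r ∈ (0, 1)`:
(i) `L (t / G^α - s)`, where `t / G^α → 0`;
(ii) `L (t / G - s / G^α) = (L / G^α) (t / G^(1-α) - s)`, where `L / G^α ≥ L / G → ∞`;
(iii) `t ln L - s L / G = (L / G) (t G ln L / L - s)`.
All three tend to `-∞`.
-/

open Real Asymptotics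

lemma sq_le_Gamma_add_one {u : ℝ} (hu : 4 ≤ u) : u ^ 2 ≤ Gamma (u + 1) := by
  have hΓ : 2 ≤ Gamma (u - 1) := by
    have hΓ3 : Gamma 3 = 2 := by
      rw [show (3 : ℝ) = 2 + 1 by norm_num, Gamma_add_one two_ne_zero, Gamma_two]; norm_num
    exact hΓ3 ▸ Gamma_strictMonoOn_Ici.monotoneOn (by norm_num : (3 : ℝ) ∈ Set.Ici 2)
      (Set.mem_Ici.2 (by linarith)) (by linarith)
  have hrec : Gamma (u + 1) = u * ((u - 1) * Gamma (u - 1)) := by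
    rw [Gamma_add_one (by linarith), ← Gamma_add_one (by linarith : u - 1 ≠ 0), sub_add_cancel]
  have hu1 : 0 ≤ u * (u - 1) := by nlinarith
  rw [hrec, ← mul_assoc]
  nlinarith [mul_le_mul_of_nonneg_left hΓ hu1]

section GammaRInverse

variable {r : ℕ}

lemma sq_le_GammaR (hr : r ≠ 0) {x : ℝ} (hx : 4 ^ r ≤ x) : x ^ 2 ≤ GammaR r x := by
  have hx0 : 0 ≤ x := le_trans (by positivity) hx
  set u := x ^ (r : ℝ)⁻¹
  have hu : 4 ≤ u :=
    calc (4 : ℝ) = ((4 : ℝ) ^ r) ^ (r : ℝ)⁻¹ := (pow_rpow_inv_natCast (by norm_num) hr).symm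
      _ ≤ u := rpow_le_rpow (by positivity) hx (by positivity)
  calc x ^ 2 = (u ^ 2) ^ r := by rw [← pow_mul, mul_comm, pow_mul, rpow_inv_natCast_pow hx0 hr]
    _ ≤ GammaR r x := pow_le_pow_left₀ (by positivity) (sq_le_Gamma_add_one hu) r

lemma le_max_sqrt_of_GammaR_le (hr : r ≠ 0) {x y : ℝ} (hxy : GammaR r x ≤ y) :
    x ≤ max (4 ^ r) √y := by
  rcases le_or_gt x (4 ^ r) with h | h
  · exact le_max_of_le_left h
  · exact le_max_of_le_right <|
      (le_abs_self x).trans (abs_le_sqrt ((sq_le_GammaR hr h.le).trans hxy))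

lemma le_GammaRInv (hr : r ≠ 0) {x y : ℝ} (hx : 1 ≤ x) (hxy : GammaR r x ≤ y) :
    x ≤ GammaRInv r y :=
  le_csSup ⟨_, fun _ hz => le_max_sqrt_of_GammaR_le hr hz.2⟩ ⟨hx, hxy⟩

lemma GammaRInv_le (hr : r ≠ 0) (y : ℝ) : GammaRInv r y ≤ max (4 ^ r) √y :=
  Real.sSup_le (fun _ hz => le_max_sqrt_of_GammaR_le hr hz.2) (le_max_of_le_left (by positivity))

lemma tendsto_GammaRInv_atTop (hr : r ≠ 0) : Tendsto (GammaRInv r) atTop atTop :=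
  tendsto_atTop.2 fun b => (eventually_ge_atTop (GammaR r (max b 1))).mono fun _ hy =>
    (le_max_left b 1).trans (le_GammaRInv hr (le_max_right b 1) hy)

lemma GammaRInv_isBigO_sqrt (hr : r ≠ 0) : GammaRInv r =O[atTop] fun y => y ^ (1 / 2 : ℝ) := by
  refine IsBigO.of_bound' ?_
  filter_upwards [(tendsto_GammaRInv_atTop hr).eventually_ge_atTop 0,
    eventually_ge_atTop (((4 : ℝ) ^ r) ^ 2)] with y hpos hy
  have hy0 : 0 ≤ y := le_trans (by positivity) hy
  rw [norm_of_nonneg hpos, norm_of_nonneg (rpow_nonneg hy0 _), ← sqrt_eq_rpow]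
  exact (GammaRInv_le hr y).trans (max_le ((le_abs_self _).trans (abs_le_sqrt hy)) le_rfl)

lemma GammaRInv_div_isBigO_sqrt (hr : r ≠ 0) {c : ℝ} (hc : 0 < c) :
    (fun L => GammaRInv r (L / c)) =O[atTop] fun L => L ^ (1 / 2 : ℝ) := by
  have hscale : (fun L : ℝ => (L / c) ^ (1 / 2 : ℝ)) =O[atTop] fun L => L ^ (1 / 2 : ℝ) :=
    (isBigO_const_mul_self (c ^ (1 / 2 : ℝ))⁻¹ _ _).congr'
      ((eventually_ge_atTop 0).mono fun L hL => by
        dsimp only; rw [div_rpow hL hc.le, inv_mul_eq_div])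
      EventuallyEq.rfl
  exact ((GammaRInv_isBigO_sqrt hr).comp_tendsto (tendsto_id.atTop_div_const hc)).trans hscale

end GammaRInverse

lemma tendsto_div_atTop_of_isLittleO {ι : Type*} {l : Filter ι} {u v : ι → ℝ} (h : u =o[l] v)
    (hu : ∀ᶠ x in l, 0 < u x) (hv : ∀ᶠ x in l, 0 < v x) :
    Tendsto (fun x => v x / u x) l atTop := by
  have h0 : Tendsto (fun x => u x / v x) l (𝓝[>] 0) :=
    tendsto_nhdsWithin_iff.2
      ⟨h.tendsto_div_nhds_zero, by filter_upwards [hu, hv] with x hux hvx using div_pos hux hvx⟩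
  simpa only [Function.comp_def, inv_div] using tendsto_inv_nhdsGT_zero.comp h0

section SublinearGrowth

variable {f : ℝ → ℝ} {β : ℝ}

lemma isLittleO_mul_log_of_isBigO_rpow (hfO : f =O[atTop] fun L => L ^ β) (hβ : β < 1) :
    (fun L => f L * log L) =o[atTop] id := by
  refine (hfO.mul_isLittleO (isLittleO_log_rpow_atTop (sub_pos.2 hβ))).congr' EventuallyEq.rfl ?_
  filter_upwards [eventually_gt_atTop 0] with L hL
  rw [← rpow_add hL, add_sub_cancel, rpow_one, id]

lemma tendsto_div_atTop_of_isBigO_rpow (hf : Tendsto f atTop atTop)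
    (hfO : f =O[atTop] fun L => L ^ β) (hβ : β < 1) :
    Tendsto (fun L => L / f L) atTop atTop := by
  have hlog : Tendsto (fun L => L / (f L * log L)) atTop atTop :=
    tendsto_div_atTop_of_isLittleO (isLittleO_mul_log_of_isBigO_rpow hfO hβ)
      (by filter_upwards [hf.eventually_gt_atTop 0, eventually_gt_atTop 1] with L h1 h2
            using mul_pos h1 (log_pos h2))
      (eventually_gt_atTop 0)
  refine (hlog.atTop_mul_atTop₀ tendsto_log_atTop).congr' ?_
  filter_upwards [hf.eventually_gt_atTop 0, eventually_gt_atTop 1] with L h1 h2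
  have := (log_pos h2).ne'
  field_simp

lemma tendsto_mul_div_rpow_sub_atBot (hf : Tendsto f atTop atTop) {α : ℝ} (hα : 0 < α)
    (t : ℝ) {s : ℝ} (hs : 0 < s) :
    Tendsto (fun L => L * (t / f L ^ α - s)) atTop atBot := by
  have hexp : Tendsto (fun L => t / f L ^ α - s) atTop (𝓝 (0 - s)) :=
    (tendsto_const_nhds.div_atTop ((tendsto_rpow_atTop hα).comp hf)).sub_const s
  exact Tendsto.atTop_mul_neg (by linarith) tendsto_id hexp

lemma tendsto_mul_div_sub_div_rpow_atBot (hf : Tendsto f atTop atTop)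
    (hfO : f =O[atTop] fun L => L ^ β) (hβ : β < 1) {α : ℝ} (hα1 : α < 1)
    (t : ℝ) {s : ℝ} (hs : 0 < s) :
    Tendsto (fun L => L * (t / f L - s / f L ^ α)) atTop atBot := by
  have hscale : Tendsto (fun L => L / f L ^ α) atTop atTop := by
    refine tendsto_atTop_mono' _ ?_ (tendsto_div_atTop_of_isBigO_rpow hf hfO hβ)
    filter_upwards [hf.eventually_ge_atTop 1, eventually_ge_atTop 0] with L h1 hL
    exact div_le_div_of_nonneg_left hL (by positivity) (rpow_le_self_of_one_le h1 hα1.le)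
  have hexp : Tendsto (fun L => t / f L ^ (1 - α) - s) atTop (𝓝 (0 - s)) :=
    (tendsto_const_nhds.div_atTop ((tendsto_rpow_atTop (sub_pos.2 hα1)).comp hf)).sub_const s
  refine (hscale.atTop_mul_neg (by linarith) hexp).congr' ?_
  filter_upwards [hf.eventually_gt_atTop 0] with L hL
  have ha := (rpow_pos_of_pos hL α).ne'
  have hb := (rpow_pos_of_pos hL (1 - α)).ne'
  calc L / f L ^ α * (t / f L ^ (1 - α) - s)
      = L * (t / (f L ^ α * f L ^ (1 - α)) - s / f L ^ α) := by field_simp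
    _ = L * (t / f L - s / f L ^ α) := by rw [← rpow_add hL, add_sub_cancel, rpow_one]

lemma tendsto_log_mul_sub_mul_div_atBot (hf : Tendsto f atTop atTop)
    (hfO : f =O[atTop] fun L => L ^ β) (hβ : β < 1) (t : ℝ) {s : ℝ} (hs : 0 < s) :
    Tendsto (fun L => log L * t - L * (s / f L)) atTop atBot := by
  have hexp : Tendsto (fun L => t * (f L * log L / id L) - s) atTop (𝓝 (t * 0 - s)) :=
    (((isLittleO_mul_log_of_isBigO_rpow hfO hβ).tendsto_div_nhds_zero).const_mul t).sub_const s
  refine ((tendsto_div_atTop_of_isBigO_rpow hf hfO hβ).atTop_mul_neg (by linarith) hexp).congr' ?_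
  filter_upwards [hf.eventually_gt_atTop 0, eventually_gt_atTop 0] with L h1 h2
  simp only [id]
  field_simp

end SublinearGrowth

lemma tendsto_rpow_div_rpow_zero {a b : ℝ → ℝ}
    (h : Tendsto (fun L => L * (a L - b L)) atTop atBot) :
    Tendsto (fun x : ℝ => x ^ a (log x) / x ^ b (log x)) atTop (𝓝 0) := by
  refine (tendsto_exp_atBot.comp (h.comp tendsto_log_atTop)).congr' ?_
  filter_upwards [eventually_gt_atTop 0] with x hx
  rw [Function.comp_apply, Function.comp_apply, mul_sub, exp_sub, rpow_def_of_pos hx,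
    rpow_def_of_pos hx]

lemma tendsto_log_rpow_div_rpow_zero {t : ℝ} {b : ℝ → ℝ}
    (h : Tendsto (fun L => log L * t - L * b L) atTop atBot) :
    Tendsto (fun x : ℝ => log x ^ t / x ^ b (log x)) atTop (𝓝 0) := by
  refine (tendsto_exp_atBot.comp (h.comp tendsto_log_atTop)).congr' ?_
  filter_upwards [eventually_gt_atTop 1] with x hx
  rw [Function.comp_apply, Function.comp_apply, exp_sub, rpow_def_of_pos (log_pos hx),
    rpow_def_of_pos (by linarith)]

theorem stmt11_general (r q₁ : ℕ) (hr : 4 ≤ r) (hq : 2 ≤ q₁) (s t : ℝ) (hs : 0 < s) :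
    Filter.Tendsto (fun m : ℕ => intScale2 r q₁ m t / polScale m s) Filter.atTop (𝓝 0) ∧
    Filter.Tendsto (fun m : ℕ => intScale1 r q₁ m t / intScale2 r q₁ m s) Filter.atTop (𝓝 0) ∧
    Filter.Tendsto (fun m : ℕ => logScale m t / intScale1 r q₁ m s) Filter.atTop (𝓝 0) := by
  have hr0 : r ≠ 0 := by omega
  have hrR : (4 : ℝ) ≤ r := by exact_mod_cast hr
  have hc : 0 < log q₁ := log_pos (by exact_mod_cast hq)
  set f : ℝ → ℝ := fun L => GammaRInv r (L / log q₁)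
  have hf : Tendsto f atTop atTop :=
    (tendsto_GammaRInv_atTop hr0).comp (tendsto_id.atTop_div_const hc)
  have hfO : f =O[atTop] fun L => L ^ (1 / 2 : ℝ) := GammaRInv_div_isBigO_sqrt hr0 hc
  have hα0 : 0 < ((r : ℝ) - 2) / r := div_pos (by linarith) (by linarith)
  have hα1 : ((r : ℝ) - 2) / r < 1 := (div_lt_one (by linarith)).2 (by linarith)
  refine ⟨?_, ?_, ?_⟩
  · exact (tendsto_rpow_div_rpow_zero
      (tendsto_mul_div_rpow_sub_atBot hf hα0 t hs)).comp tendsto_natCast_atTop_atTop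
  · exact (tendsto_rpow_div_rpow_zero
      (tendsto_mul_div_sub_div_rpow_atBot hf hfO (by norm_num) hα1 t hs)).comp
        tendsto_natCast_atTop_atTop
  · exact (tendsto_log_rpow_div_rpow_zero
      (tendsto_log_mul_sub_mul_div_atBot hf hfO (by norm_num) t hs)).comp
        tendsto_natCast_atTop_atTop

/-- for any integer `r ≥ 4`, any base `q₁ ≥ 2` and any `s, t > 0`, the
intermediate scales satisfy `a^{int2,r}_m(t) = o(m^s)`, `a^{int1,r}_m(t) = o(a^{int2,r}_m(s))`
and `(ln m)^t = o(a^{int1,r}_m(s))` as `m → ∞`. -/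
theorem stmt11 (r q₁ : ℕ) (hr : 4 ≤ r) (hq : 2 ≤ q₁) (s t : ℝ) (hs : 0 < s) (ht : 0 < t) :
    Filter.Tendsto (fun m : ℕ => intScale2 r q₁ m t / polScale m s) Filter.atTop (𝓝 0) ∧
    Filter.Tendsto (fun m : ℕ => intScale1 r q₁ m t / intScale2 r q₁ m s) Filter.atTop (𝓝 0) ∧
    Filter.Tendsto (fun m : ℕ => logScale m t / intScale1 r q₁ m s) Filter.atTop (𝓝 0) :=
  stmt11_general r q₁ hr hq s t hs
end

section
/- Fix an integer r ≥ 4 and an integer q₁ ≥ 2, and define recursively q_{n+1} = q_n^{n^r} for n ≥ 1. Then for every n ≥ 2 and every t > 0: q_n^{(n-1)^r t / n^r} ≤ a^{int1,r}_{q_n^{(n-1)^r}}(t) ≤ q_n^t, and q_n^{(n-1)^r t / n^{r-2}} ≤ a^{int2,r}_{q_n^{(n-1)^r}}(t) ≤ q_n^{(n-1)² t}. -/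
open Filter
open scoped Topology

/-! Write `n = k + 1`. Since `log q_n = (k!)^r log q₁`, the argument of `Γ_r⁻¹` at
`m = q_n^{k^r}` is `(k · k!)^r`, which lies between `Γ_r(k^r) = (k!)^r` and `Γ_r((k+1)^r) = ((k+1)!)^r`.
Monotonicity of `Γ_r` on `[1, ∞)` therefore puts `Γ_r⁻¹` in `[k^r, (k+1)^r]`, and both scaling
exponents are bounded through the monotonicity of `x ↦ q_n^x`. -/

open Real Set
open scoped Nat

lemma gammaR_monotoneOn (r : ℕ) : MonotoneOn (GammaR r) (Ici 1) := by
  intro x hx y _ hxy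
  have hx' : (1 : ℝ) ≤ x ^ (r : ℝ)⁻¹ := one_le_rpow hx (by positivity)
  have hxy' : x ^ (r : ℝ)⁻¹ ≤ y ^ (r : ℝ)⁻¹ :=
    rpow_le_rpow (zero_le_one.trans hx) hxy (by positivity)
  have hΓ : Gamma (x ^ (r : ℝ)⁻¹ + 1) ≤ Gamma (y ^ (r : ℝ)⁻¹ + 1) :=
    Gamma_strictMonoOn_Ici.monotoneOn (mem_Ici.mpr (by linarith)) (mem_Ici.mpr (by linarith))
      (by linarith)
  exact pow_le_pow_left₀ (Gamma_pos_of_pos (by linarith)).le hΓ r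

lemma gammaR_natCast_pow {r : ℕ} (hr : r ≠ 0) (k : ℕ) : GammaR r ((k : ℝ) ^ r) = (k ! : ℝ) ^ r := by
  rw [GammaR, pow_rpow_inv_natCast k.cast_nonneg hr, Gamma_nat_eq_factorial]

lemma gammaRInv_mem_Icc {r : ℕ} {a b y : ℝ} (ha : 1 ≤ a) (hab : a ≤ b)
    (hay : GammaR r a ≤ y) (hyb : y < GammaR r b) : GammaRInv r y ∈ Icc a b := by
  have hub : ∀ x ∈ {x : ℝ | 1 ≤ x ∧ GammaR r x ≤ y}, x ≤ b := by
    rintro x ⟨hx, hxy⟩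
    by_contra! hbx
    have := gammaR_monotoneOn r (ha.trans hab) hx hbx.le
    linarith
  exact ⟨le_csSup ⟨b, hub⟩ ⟨ha, hay⟩, csSup_le ⟨a, ha, hay⟩ hub⟩

lemma gammaRInv_mul_factorial_pow_mem_Icc {r k : ℕ} (hr : r ≠ 0) (hk : 1 ≤ k) :
    GammaRInv r (((k : ℝ) * k !) ^ r) ∈ Icc ((k : ℝ) ^ r) (((k : ℝ) + 1) ^ r) := by
  have hk' : (1 : ℝ) ≤ k := by exact_mod_cast hk
  have hfact : (1 : ℝ) ≤ k ! := by exact_mod_cast Nat.one_le_iff_ne_zero.mpr k.factorial_ne_zero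
  apply gammaRInv_mem_Icc (one_le_pow₀ hk') (by gcongr; linarith)
  · rw [gammaR_natCast_pow hr]
    gcongr
    nlinarith
  · rw [← Nat.cast_add_one, gammaR_natCast_pow hr, Nat.factorial_succ]
    push_cast
    gcongr
    linarith

lemma log_eq_factorial_pow_mul_log {r : ℕ} {q : ℕ → ℕ}
    (hrec : ∀ n : ℕ, 1 ≤ n → q (n + 1) = q n ^ (n ^ r)) (n : ℕ) :
    Real.log (q (n + 1)) = (n ! : ℝ) ^ r * Real.log (q 1) := by
  induction n with
  | zero => simp
  | succ n ih =>
    rw [hrec (n + 1) n.succ_pos, Nat.cast_pow, Real.log_pow, ih, Nat.factorial_succ]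
    push_cast
    rw [mul_pow]
    ring

lemma log_pow_div_log_eq_mul_factorial_pow {r : ℕ} {q : ℕ → ℕ}
    (hrec : ∀ n : ℕ, 1 ≤ n → q (n + 1) = q n ^ (n ^ r)) (hq : Real.log (q 1) ≠ 0) (k : ℕ) :
    Real.log (q (k + 1) ^ k ^ r : ℕ) / Real.log (q 1) = ((k : ℝ) * k !) ^ r := by
  rw [Nat.cast_pow, Real.log_pow, log_eq_factorial_pow_mul_log hrec, mul_pow]
  field_simp
  push_cast
  ring

lemma pow_rpow_div_mem_Icc {Q a b J t : ℝ} (N : ℕ) (hQ : 1 ≤ Q) (ha : 0 < a)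
    (hJ : J ∈ Icc a b) (ht : 0 ≤ t) :
    (Q ^ N) ^ (t / J) ∈ Icc (Q ^ (N * t / b)) (Q ^ (N * t / a)) := by
  have hJpos : 0 < J := ha.trans_le hJ.1
  rw [← rpow_natCast_mul (zero_le_one.trans hQ), ← mul_div_assoc, mem_Icc]
  exact ⟨rpow_le_rpow_of_exponent_le hQ (by gcongr; exact hJ.2),
    rpow_le_rpow_of_exponent_le hQ (by gcongr; exact hJ.1)⟩

lemma rpow_div_mem_Icc_of_mem_Icc {a b x s : ℝ} {r : ℕ} (ha : 0 ≤ a) (hb : 0 ≤ b) (hr : r ≠ 0)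
    (hs : 0 ≤ s) (hx : x ∈ Icc (a ^ r) (b ^ r)) : x ^ (s / r) ∈ Icc (a ^ s) (b ^ s) := by
  have hr' : (r : ℝ) ≠ 0 := Nat.cast_ne_zero.mpr hr
  have hdiv : 0 ≤ s / r := by positivity
  have hmul : (r : ℝ) * (s / r) = s := by field_simp
  rw [mem_Icc, ← hmul, rpow_natCast_mul ha, rpow_natCast_mul hb, hmul]
  exact ⟨rpow_le_rpow (by positivity) hx.1 hdiv,
    rpow_le_rpow ((pow_nonneg ha r).trans hx.1) hx.2 hdiv⟩

lemma gammaRInv_mul_factorial_pow_rpow_mem_Icc {r k : ℕ} (hr : 2 ≤ r) (hk : 1 ≤ k) :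
    GammaRInv r (((k : ℝ) * k !) ^ r) ^ (((r : ℝ) - 2) / r) ∈
      Icc ((k : ℝ) ^ (r - 2)) (((k : ℝ) + 1) ^ (r - 2)) := by
  have hs : (r : ℝ) - 2 = ((r - 2 : ℕ) : ℝ) := by push_cast [Nat.cast_sub hr]; ring
  rw [hs, ← rpow_natCast, ← rpow_natCast]
  exact rpow_div_mem_Icc_of_mem_Icc (by positivity) (by positivity) (by omega) (by positivity)
    (gammaRInv_mul_factorial_pow_mem_Icc (by omega) hk)

/-- with `q_{n+1} = q_n^{n^r}` and `q_1 = q₁ ≥ 2`, for every `n ≥ 2` and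
`t > 0` one has
`q_n^{(n-1)^r t / n^r} ≤ a^{int1,r}_{q_n^{(n-1)^r}}(t) ≤ q_n^t` and
`q_n^{(n-1)^r t / n^{r-2}} ≤ a^{int2,r}_{q_n^{(n-1)^r}}(t) ≤ q_n^{(n-1)² t}`. -/
theorem stmt13 (r q₁ : ℕ) (hr : 4 ≤ r) (hq : 2 ≤ q₁) (q : ℕ → ℕ)
    (hq1 : q 1 = q₁) (hrec : ∀ n : ℕ, 1 ≤ n → q (n + 1) = q n ^ (n ^ r)) :
    ∀ n : ℕ, 2 ≤ n → ∀ t : ℝ, 0 < t →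
      ((q n : ℝ) ^ (((n : ℝ) - 1) ^ r * t / (n : ℝ) ^ r) ≤
          intScale1 r q₁ (q n ^ ((n - 1) ^ r)) t ∧
        intScale1 r q₁ (q n ^ ((n - 1) ^ r)) t ≤ (q n : ℝ) ^ t) ∧
      ((q n : ℝ) ^ (((n : ℝ) - 1) ^ r * t / (n : ℝ) ^ (r - 2)) ≤
          intScale2 r q₁ (q n ^ ((n - 1) ^ r)) t ∧
        intScale2 r q₁ (q n ^ ((n - 1) ^ r)) t ≤ (q n : ℝ) ^ (((n : ℝ) - 1) ^ 2 * t)) := by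
  intro n hn t ht
  obtain ⟨k, rfl⟩ : ∃ k, n = k + 1 := ⟨n - 1, by omega⟩
  have hk : 1 ≤ k := by omega
  have hlog₁ : 0 < Real.log (q 1) := hq1 ▸ Real.log_pos (by exact_mod_cast hq)
  have hQ : (1 : ℝ) ≤ q (k + 1) := ((Real.log_pos_iff (Nat.cast_nonneg _)).mp
    (by rw [log_eq_factorial_pow_mul_log hrec k]; positivity)).le
  have hI := gammaRInv_mul_factorial_pow_mem_Icc (by omega : r ≠ 0) hk
  have hJ := gammaRInv_mul_factorial_pow_rpow_mem_Icc (by omega : 2 ≤ r) hk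
  have hk0 : (0 : ℝ) < k := by exact_mod_cast hk
  have h1 := pow_rpow_div_mem_Icc (k ^ r) hQ (by positivity) hI ht.le
  have h2 := pow_rpow_div_mem_Icc (k ^ r) hQ (by positivity) hJ ht.le
  have e1 : (k : ℝ) ^ r * t / k ^ r = t := by field_simp
  have e2 : (k : ℝ) ^ r * t / k ^ (r - 2) = k ^ 2 * t := by
    rw [← pow_sub_mul_pow (k : ℝ) (by omega : 2 ≤ r)]
    field_simp
  push_cast [e1, e2] at h1 h2
  rw [Nat.add_sub_cancel, intScale1, intScale2, ← hq1,
    log_pow_div_log_eq_mul_factorial_pow hrec hlog₁.ne' k]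
  push_cast [add_sub_cancel_right]
  exact ⟨h1, h2⟩
end

section
/- Let (X,d) be a compact metric space, let T, S : X → X be continuous maps, let m be a positive integer and ε > 0. For 0 ≤ j ≤ m−1 let L_j ≥ 1 be a Lipschitz constant for the iterate T^j (with L_0 = 1). If sup_{x∈X} d(T x, S x) ≤ ε / (2·Σ_{j=0}^{m-1} L_j), then sup_{x∈X} d(T^i x, S^i x) ≤ ε/2 for all 0 ≤ i ≤ m−1, and consequently the minimal Bowen covering numbers satisfy N_{d_m^S}(4ε) ≤ N_{d_m^T}(2ε) ≤ N_{d_m^S}(ε). -/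
open MeasureTheory Filter Set
open scoped Topology ENNReal NNReal

noncomputable section

/-- The Bowen metric `d_n^T(x,y) = max_{0 ≤ i ≤ n-1} d(T^i x, T^i y)`. -/
def bowenDist {X : Type*} [PseudoMetricSpace X] (T : X → X) (n : ℕ) (x y : X) : ℝ :=
  (((Finset.range n).sup fun i => nndist (T^[i] x) (T^[i] y)) : ℝ≥0)

/-- `N_{d_n^T}(ε)`: the minimal number of `(ε,n)`-Bowen balls of `T` needed to cover the
whole space. -/
def bowenCoverNum {X : Type*} [PseudoMetricSpace X] (T : X → X) (n : ℕ) (ε : ℝ) : ℕ :=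
  sInf {N : ℕ | ∃ F : Finset X, F.card = N ∧ ∀ y : X, ∃ x ∈ F, bowenDist T n x y < ε}

end

/-!
Write `δ` for the uniform distance between `T` and `S`. Splitting
`d(T^{i+1} x, S^{i+1} x) ≤ d(T^i (T x), T^i (S x)) + d(T^i (S x), S^i (S x))`
and inducting on `i` gives `d(T^i x, S^i x) ≤ (L_0 + ⋯ + L_{i-1}) δ ≤ ε/2` for `i < m`.
By the triangle inequality the Bowen metrics `d_m^T` and `d_m^S` then differ by at most `ε`,
so a cover by `(r, m)`-Bowen balls of one map is a cover by `(r + ε, m)`-Bowen balls of the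
other. Compactness and continuity of `S` make the covering numbers of `S` finite; without
finiteness `sInf ∅ = 0` would break the comparison.
-/

section BowenDist

variable {X : Type*} [PseudoMetricSpace X]

lemma dist_iterate_le_bowenDist (T : X → X) {n i : ℕ} (hi : i < n) (x y : X) :
    dist (T^[i] x) (T^[i] y) ≤ bowenDist T n x y := by
  rw [bowenDist, dist_nndist, NNReal.coe_le_coe]
  exact Finset.le_sup (f := fun i => nndist (T^[i] x) (T^[i] y)) (Finset.mem_range.2 hi)

lemma bowenDist_le {T : X → X} {n : ℕ} {x y : X} {c : ℝ} (hc : 0 ≤ c)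
    (h : ∀ i < n, dist (T^[i] x) (T^[i] y) ≤ c) : bowenDist T n x y ≤ c := by
  rw [bowenDist, ← Real.coe_toNNReal c hc, NNReal.coe_le_coe, Finset.sup_le_iff]
  intro i hi
  rw [← NNReal.coe_le_coe, Real.coe_toNNReal c hc, ← dist_nndist]
  exact h i (Finset.mem_range.1 hi)

lemma bowenDist_lt_iff {T : X → X} {n : ℕ} {x y : X} {c : ℝ} (hc : 0 < c) :
    bowenDist T n x y < c ↔ ∀ i < n, dist (T^[i] x) (T^[i] y) < c := by
  rw [bowenDist, ← Real.coe_toNNReal c hc.le, NNReal.coe_lt_coe,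
    Finset.sup_lt_iff (by simpa using hc : (⊥ : ℝ≥0) < c.toNNReal)]
  simp only [Finset.mem_range, ← NNReal.coe_lt_coe, Real.coe_toNNReal c hc.le, coe_nndist]

lemma isOpen_setOf_bowenDist_lt {T : X → X} (hT : Continuous T) (n : ℕ) (x : X) {r : ℝ}
    (hr : 0 < r) : IsOpen {y | bowenDist T n x y < r} := by
  have hball : {y | bowenDist T n x y < r} =
      ⋂ i ∈ Finset.range n, T^[i] ⁻¹' Metric.ball (T^[i] x) r := by
    ext y
    simp only [mem_ofPred_eq, bowenDist_lt_iff hr, mem_iInter, Finset.mem_range, mem_preimage,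
      Metric.mem_ball, dist_comm (T^[_] y)]
  rw [hball]
  exact isOpen_biInter_finset fun i _ => Metric.isOpen_ball.preimage (hT.iterate i)

lemma exists_finset_bowenDist_lt [CompactSpace X] {T : X → X} (hT : Continuous T) (n : ℕ)
    {r : ℝ} (hr : 0 < r) : ∃ F : Finset X, ∀ y, ∃ x ∈ F, bowenDist T n x y < r := by
  obtain ⟨F, hF⟩ := isCompact_univ.elim_finite_subcover (fun x => {y | bowenDist T n x y < r})
    (fun x => isOpen_setOf_bowenDist_lt hT n x hr)
    (fun x _ => mem_iUnion.2 ⟨x, by simpa [bowenDist_lt_iff hr] using fun i _ => hr⟩)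
  exact ⟨F, fun y => by simpa using hF (mem_univ y)⟩

lemma bowenDist_le_bowenDist_add {T S : X → X} {n : ℕ} {η : ℝ} (hη : 0 ≤ η)
    (h : ∀ x, ∀ i < n, dist (T^[i] x) (S^[i] x) ≤ η) (x y : X) :
    bowenDist T n x y ≤ bowenDist S n x y + 2 * η := by
  refine bowenDist_le (add_nonneg (NNReal.coe_nonneg _) (by positivity)) fun i hi => ?_
  calc dist (T^[i] x) (T^[i] y)
      ≤ dist (T^[i] x) (S^[i] x) + dist (S^[i] x) (S^[i] y) + dist (S^[i] y) (T^[i] y) :=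
        dist_triangle4 _ _ _ _
    _ ≤ η + bowenDist S n x y + η := by
        gcongr
        · exact h x i hi
        · exact dist_iterate_le_bowenDist S hi x y
        · exact dist_comm (T^[i] y) _ ▸ h y i hi
    _ = bowenDist S n x y + 2 * η := by ring

end BowenDist

section BowenCover

variable {X : Type*} [PseudoMetricSpace X] {T S : X → X} {n : ℕ} {r r' c : ℝ}

lemma exists_finset_bowenDist_lt_of_le (hTS : ∀ x y, bowenDist T n x y ≤ bowenDist S n x y + c)
    (hr : r + c ≤ r') {F : Finset X} (hF : ∀ y, ∃ x ∈ F, bowenDist S n x y < r) :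
    ∀ y, ∃ x ∈ F, bowenDist T n x y < r' := fun y =>
  let ⟨x, hx, hxy⟩ := hF y
  ⟨x, hx, by linarith [hTS x y]⟩

lemma bowenCoverNum_le_of_le (hTS : ∀ x y, bowenDist T n x y ≤ bowenDist S n x y + c)
    (hr : r + c ≤ r') (hS : ∃ F : Finset X, ∀ y, ∃ x ∈ F, bowenDist S n x y < r) :
    bowenCoverNum T n r' ≤ bowenCoverNum S n r := by
  obtain ⟨F, hF⟩ := hS
  refine csInf_le_csInf (OrderBot.bddBelow _) ⟨F.card, F, rfl, hF⟩ ?_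
  rintro N ⟨G, rfl, hG⟩
  exact ⟨G, rfl, exists_finset_bowenDist_lt_of_le hTS hr hG⟩

end BowenCover

lemma dist_iterate_le_sum_mul {X : Type*} [PseudoMetricSpace X] {T S : X → X} {L : ℕ → ℝ≥0}
    {δ : ℝ} (hclose : ∀ x, dist (T x) (S x) ≤ δ) :
    ∀ i, (∀ j < i, LipschitzWith (L j) T^[j]) →
      ∀ x, dist (T^[i] x) (S^[i] x) ≤ (∑ j ∈ Finset.range i, (L j : ℝ)) * δ
  | 0, _, x => by simp
  | i + 1, hLip, x => by
    have hstep : dist (T^[i] (T x)) (T^[i] (S x)) ≤ L i * δ :=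
      ((hLip i i.lt_succ_self).dist_le_mul _ _).trans (by gcongr; exact hclose x)
    have hrest :=
      dist_iterate_le_sum_mul hclose i (fun j hj => hLip j (hj.trans i.lt_succ_self)) (S x)
    calc dist (T^[i + 1] x) (S^[i + 1] x)
        ≤ dist (T^[i] (T x)) (T^[i] (S x)) + dist (T^[i] (S x)) (S^[i] (S x)) :=
          dist_triangle _ _ _
      _ ≤ L i * δ + (∑ j ∈ Finset.range i, (L j : ℝ)) * δ := add_le_add hstep hrest
      _ = (∑ j ∈ Finset.range (i + 1), (L j : ℝ)) * δ := by rw [Finset.sum_range_succ]; ring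

theorem stmt15_general {X : Type*} [MetricSpace X] [CompactSpace X]
    (T S : X → X) (hS : Continuous S)
    (m : ℕ) (ε : ℝ) (hε : 0 < ε)
    (L : ℕ → ℝ≥0)
    (hLip : ∀ j, j < m → LipschitzWith (L j) T^[j])
    (hclose : ∀ x : X, dist (T x) (S x) ≤ ε / (2 * ∑ j ∈ Finset.range m, (L j : ℝ))) :
    (∀ x : X, ∀ i, i < m → dist (T^[i] x) (S^[i] x) ≤ ε / 2) ∧
    bowenCoverNum S m (4 * ε) ≤ bowenCoverNum T m (2 * ε) ∧
    bowenCoverNum T m (2 * ε) ≤ bowenCoverNum S m ε := by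
  set Λ : ℝ := ∑ j ∈ Finset.range m, (L j : ℝ)
  have hΛ : Λ * (ε / (2 * Λ)) ≤ ε / 2 := by
    have hΛ0 : 0 ≤ Λ := Finset.sum_nonneg fun j _ => (L j).coe_nonneg
    rcases hΛ0.eq_or_lt with h | h
    · rw [← h, zero_mul]; positivity
    · exact (by field_simp : Λ * (ε / (2 * Λ)) = ε / 2).le
  have hshadow : ∀ x, ∀ i < m, dist (T^[i] x) (S^[i] x) ≤ ε / 2 := fun x i hi =>
    calc dist (T^[i] x) (S^[i] x)
        ≤ (∑ j ∈ Finset.range i, (L j : ℝ)) * (ε / (2 * Λ)) :=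
          dist_iterate_le_sum_mul hclose i (fun j hj => hLip j (hj.trans hi)) x
      _ ≤ Λ * (ε / (2 * Λ)) := by
          gcongr
          exact Finset.sum_le_sum_of_subset_of_nonneg (Finset.range_subset_range.2 hi.le)
            fun j _ _ => (L j).coe_nonneg
      _ ≤ ε / 2 := hΛ
  have hTS x y : bowenDist T m x y ≤ bowenDist S m x y + ε :=
    (bowenDist_le_bowenDist_add (by positivity) hshadow x y).trans_eq (by ring)
  have hST x y : bowenDist S m x y ≤ bowenDist T m x y + ε :=
    (bowenDist_le_bowenDist_add (by positivity)
      (fun x i hi => dist_comm (S^[i] x) _ ▸ hshadow x i hi) x y).trans_eq (by ring)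
  obtain ⟨F, hF⟩ := exists_finset_bowenDist_lt hS m hε
  refine ⟨hshadow, bowenCoverNum_le_of_le hST (by linarith) ?_,
    bowenCoverNum_le_of_le hTS (by linarith) ⟨F, hF⟩⟩
  exact ⟨F, exists_finset_bowenDist_lt_of_le hTS (by linarith) hF⟩

/-- if `T, S` are continuous self-maps of a compact metric space, `L j ≥ 1`
is a Lipschitz constant for `T^j` (`L 0 = 1`) for `0 ≤ j ≤ m-1`, and
`sup_x d(Tx, Sx) ≤ ε / (2 Σ_{j<m} L j)`, then `sup_x d(T^i x, S^i x) ≤ ε/2` for all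
`i ≤ m-1`, and consequently `N_{d_m^S}(4ε) ≤ N_{d_m^T}(2ε) ≤ N_{d_m^S}(ε)`. -/
theorem stmt15 {X : Type*} [MetricSpace X] [CompactSpace X]
    (T S : X → X) (hT : Continuous T) (hS : Continuous S)
    (m : ℕ) (hm : 0 < m) (ε : ℝ) (hε : 0 < ε)
    (L : ℕ → ℝ≥0) (hL0 : L 0 = 1) (hL1 : ∀ j, j < m → 1 ≤ L j)
    (hLip : ∀ j, j < m → LipschitzWith (L j) T^[j])
    (hclose : ∀ x : X, dist (T x) (S x) ≤ ε / (2 * ∑ j ∈ Finset.range m, (L j : ℝ))) :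
    (∀ x : X, ∀ i, i < m → dist (T^[i] x) (S^[i] x) ≤ ε / 2) ∧
    bowenCoverNum S m (4 * ε) ≤ bowenCoverNum T m (2 * ε) ∧
    bowenCoverNum T m (2 * ε) ≤ bowenCoverNum S m ε :=
  stmt15_general T S hS m ε hε L hLip hclose
end
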